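/- Let I ⊆ k[x_1,…,x_n] be an ideal, let ℚ^r carry the lexicographic order, and let M ∈ ℚ^{r×n}. Then there exists a single weight vector u ∈ ℚ^n such that in_M(I) = in_u(I). -/

import Mathlib

/-!
Homogenize `I` to `J` with an extra variable of weight `0`. Dehomogenization maps `in_w(J)` onto
`in_w(I)` for every weight `w`, so it suffices to find `u` with `in_M(J) = in_u(J)`.

By Noetherianity `in_M(J)` is generated by the initial forms of finitely many elements of `J`, so
it only depends on finitely many lexicographic comparisons of `M`-weights; a linear form `c` on
`ℚ^r` reproduces these, and `u = cM` gives `in_M(J) ⊆ in_u(J)`.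

Equality follows by comparing dimensions degree by degree. For any weight `w`, the degree-`e`
parts of `J` and of `in_w(J)` have the same initial monomials for a total order refining `w`,
hence the same dimension. This rests on the fact that the weight-`q` homogeneous elements of
`in_w(J)` are exactly the weight-`q` initial forms of elements of `J`.
-/

open MvPolynomial

instance finWellFoundedLT {r : ℕ} : WellFoundedLT (Fin r) := Finite.to_wellFoundedLT

/-- The initial form of a polynomial with respect to a comparison `le` on exponent vectors:
the sum of the terms of `f` whose exponent is `le`-minimal in the support of `f`. -/
noncomputable def initialForm {k : Type} [Field k] {n : ℕ}
    (le : (Fin n →₀ ℕ) → (Fin n →₀ ℕ) → Prop)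
    (f : MvPolynomial (Fin n) k) : MvPolynomial (Fin n) k :=
  letI := Classical.decPred fun α : Fin n →₀ ℕ => ∀ β ∈ f.support, le α β
  ∑ α ∈ f.support.filter (fun α => ∀ β ∈ f.support, le α β),
    monomial α (MvPolynomial.coeff α f)

/-- The initial ideal of `I`: the ideal generated by initial forms of nonzero elements of `I`. -/
noncomputable def initialIdeal {k : Type} [Field k] {n : ℕ}
    (le : (Fin n →₀ ℕ) → (Fin n →₀ ℕ) → Prop)
    (I : Ideal (MvPolynomial (Fin n) k)) : Ideal (MvPolynomial (Fin n) k) :=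
  Ideal.span {g | ∃ f ∈ I, f ≠ 0 ∧ g = initialForm le f}

/-- The weight `Mα ∈ ℚ^r` of an exponent vector `α` under the weighting matrix `M`. -/
def mwt {n r : ℕ} (M : Matrix (Fin r) (Fin n) ℚ) (α : Fin n →₀ ℕ) : Fin r → ℚ :=
  fun i => ∑ j, M i j * (α j : ℚ)

/-- Comparison of exponents by `M`-weight, in the lexicographic order on `ℚ^r`. -/
def mLe {n r : ℕ} (M : Matrix (Fin r) (Fin n) ℚ) : (Fin n →₀ ℕ) → (Fin n →₀ ℕ) → Prop :=
  fun α β => toLex (mwt M α) ≤ toLex (mwt M β)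

/-- The weight `u·α ∈ ℚ` of an exponent vector under a single weight vector `u ∈ ℚ^n`. -/
def uwt {n : ℕ} (u : Fin n → ℚ) (α : Fin n →₀ ℕ) : ℚ := ∑ j, u j * (α j : ℚ)

/-- Comparison of exponents by `u`-weight. -/
def uLe {n : ℕ} (u : Fin n → ℚ) : (Fin n →₀ ℕ) → (Fin n →₀ ℕ) → Prop :=
  fun α β => uwt u α ≤ uwt u β

open Finsupp (weight)

attribute [local instance] MvPolynomial.gradedAlgebra

section InitialForm

variable {k : Type} [Field k] {n : ℕ}

open scoped Classical in
theorem coeff_initialForm (le : (Fin n →₀ ℕ) → (Fin n →₀ ℕ) → Prop)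
    (f : MvPolynomial (Fin n) k) (γ : Fin n →₀ ℕ) :
    coeff γ (initialForm le f) =
      if γ ∈ f.support ∧ ∀ β ∈ f.support, le γ β then coeff γ f else 0 := by
  simp only [initialForm, coeff_sum, coeff_monomial, Finset.sum_ite_eq', Finset.mem_filter]

theorem initialForm_congr {le le' : (Fin n →₀ ℕ) → (Fin n →₀ ℕ) → Prop}
    {f : MvPolynomial (Fin n) k} (h : ∀ α ∈ f.support, ∀ β ∈ f.support, le α β ↔ le' α β) :
    initialForm le f = initialForm le' f := by
  classical
  ext γ
  simp only [coeff_initialForm]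
  exact if_congr (and_congr_right fun hγ => forall₂_congr fun β hβ => h γ hγ β hβ) rfl rfl

theorem initialIdeal_eq_span_image (le : (Fin n →₀ ℕ) → (Fin n →₀ ℕ) → Prop)
    (I : Ideal (MvPolynomial (Fin n) k)) :
    initialIdeal le I = Ideal.span (initialForm le '' {f | f ∈ I ∧ f ≠ 0}) := by
  simp only [initialIdeal, Set.image]
  congr with g
  simp only [Set.mem_ofPred_eq, and_assoc, eq_comm]

theorem exists_finset_initialIdeal_le (le : (Fin n →₀ ℕ) → (Fin n →₀ ℕ) → Prop)
    (J : Ideal (MvPolynomial (Fin n) k)) :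
    ∃ S : Finset (Fin n →₀ ℕ), ∀ le' : (Fin n →₀ ℕ) → (Fin n →₀ ℕ) → Prop,
      (∀ α ∈ S, ∀ β ∈ S, le α β ↔ le' α β) → initialIdeal le J ≤ initialIdeal le' J := by
  classical
  obtain ⟨s, hs, hspan⟩ := (Submodule.fg_span_iff_fg_span_finset_subset _).1 <|
    initialIdeal_eq_span_image le J ▸ IsNoetherian.noetherian (initialIdeal le J)
  obtain ⟨T, hT, rfl⟩ := Finset.subset_set_image_iff.1 hs
  refine ⟨T.biUnion support, fun le' hle' => ?_⟩
  rw [initialIdeal_eq_span_image le, Ideal.span, hspan, Finset.coe_image, Ideal.span_le]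
  rintro _ ⟨g, hg, rfl⟩
  have hsub : g.support ⊆ T.biUnion support := Finset.subset_biUnion_of_mem support hg
  rw [initialForm_congr fun α hα β hβ => hle' α (hsub hα) β (hsub hβ)]
  exact Ideal.subset_span ⟨g, (hT hg).1, (hT hg).2, rfl⟩

end InitialForm

section WeightedComponents

variable {σ R M : Type*} [CommSemiring R]

theorem weightedHomogeneousComponent_monomial [AddCommMonoid M] (w : σ → M) (m : M)
    (β : σ →₀ ℕ) (c : R) [Decidable (weight w β = m)] :
    weightedHomogeneousComponent w m (monomial β c) =
      if weight w β = m then monomial β c else 0 := by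
  split_ifs with h
  · exact (isWeightedHomogeneous_monomial w β c h).weightedHomogeneousComponent_same
  · exact (isWeightedHomogeneous_monomial w β c rfl).weightedHomogeneousComponent_ne m (Ne.symm h)

theorem weightedHomogeneousComponent_mul_of_isWeightedHomogeneous [AddCancelCommMonoid M]
    {w : σ → M} {a : MvPolynomial σ R} {d : M} (ha : a.IsWeightedHomogeneous w d) (q : M)
    (b : MvPolynomial σ R) :
    weightedHomogeneousComponent w (d + q) (a * b) = a * weightedHomogeneousComponent w q b := by
  classical
  let := weightedGradedAlgebra R w
  have hdec (x : MvPolynomial σ R) (i : M) :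
      (DirectSum.decompose (weightedHomogeneousSubmodule R w) x i : MvPolynomial σ R) =
        weightedHomogeneousComponent w i x :=
    weightedDecomposition.decompose'_apply R w x i
  simpa only [hdec] using
    DirectSum.coe_decompose_mul_add_of_left_mem (weightedHomogeneousSubmodule R w) (j := q)
      (b := b) ha

theorem homogeneousComponent_weightedHomogeneousComponent [AddCommMonoid M] (w : σ → M)
    (e : ℕ) (q : M) (f : MvPolynomial σ R) :
    homogeneousComponent e (weightedHomogeneousComponent w q f) =
      weightedHomogeneousComponent w q (homogeneousComponent e f) := by
  classical
  ext γ
  simp only [coeff_homogeneousComponent, coeff_weightedHomogeneousComponent]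
  split_ifs <;> rfl

theorem homogeneousComponent_mem_restrictSupport {s : Set (σ →₀ ℕ)} {f : MvPolynomial σ R}
    (hf : f ∈ restrictSupport R s) (e : ℕ) : homogeneousComponent e f ∈ restrictSupport R s := by
  classical
  refine (mem_restrictSupport_iff R).2 fun γ hγ => hf ?_
  rw [Finset.mem_coe, support_homogeneousComponent, Finset.mem_filter] at hγ
  exact hγ.1

end WeightedComponents

section Weight

variable {k : Type} [Field k] {n : ℕ} {G : Type*} [AddCommMonoid G] [LinearOrder G]

def weightLe (w : Fin n → G) : (Fin n →₀ ℕ) → (Fin n →₀ ℕ) → Prop :=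
  fun α β => weight w α ≤ weight w β

variable (w : Fin n → G)

theorem initialForm_eq_weightedHomogeneousComponent {f : MvPolynomial (Fin n) k} {q : G}
    (hf : f ∈ restrictSupport k {β | q ≤ weight w β})
    (hq : weightedHomogeneousComponent w q f ≠ 0) :
    initialForm (weightLe w) f = weightedHomogeneousComponent w q f := by
  classical
  obtain ⟨α, hα⟩ := support_nonempty.2 hq
  rw [support_weightedHomogeneousComponent, Finset.mem_filter] at hα
  have hmin : ∀ γ ∈ f.support, (∀ β ∈ f.support, weightLe w γ β) ↔ weight w γ = q :=
    fun γ hγ => ⟨fun h => le_antisymm (hα.2 ▸ h α hα.1) (hf hγ),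
      fun h β hβ => h.trans_le (hf hβ)⟩
  ext γ
  rw [coeff_initialForm, coeff_weightedHomogeneousComponent]
  by_cases hγ : γ ∈ f.support
  · simp only [hγ, true_and, hmin γ hγ]
  · simp [hγ, notMem_support_iff.1 hγ]

theorem exists_initialForm_eq_weightedHomogeneousComponent {f : MvPolynomial (Fin n) k}
    (hf : f ≠ 0) : ∃ q, f ∈ restrictSupport k {β | q ≤ weight w β} ∧
      weightedHomogeneousComponent w q f ≠ 0 ∧
      initialForm (weightLe w) f = weightedHomogeneousComponent w q f := by
  classical
  obtain ⟨α, hα, hmin⟩ := f.support.exists_min_image (weight w) (support_nonempty.2 hf)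
  have hf' : f ∈ restrictSupport k {β | weight w α ≤ weight w β} := hmin
  have hq : weightedHomogeneousComponent w (weight w α) f ≠ 0 := by
    rw [← support_nonempty]
    exact ⟨α, by simpa [support_weightedHomogeneousComponent] using hα⟩
  exact ⟨_, hf', hq, initialForm_eq_weightedHomogeneousComponent w hf' hq⟩

end Weight

section InitialPart

variable {k : Type} [Field k] {n : ℕ}

section

variable {G : Type*} [AddCommMonoid G] [LinearOrder G]

/-- Apart from `0`, the elements of `initialPart w I q` are the initial forms of weight `q` of
elements of `I`. -/
noncomputable def initialPart {σ : Type*} (w : σ → G) (I : Ideal (MvPolynomial σ k)) (q : G) :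
    Submodule k (MvPolynomial σ k) :=
  (I.restrictScalars k ⊓ restrictSupport k {β | q ≤ weight w β}).map
    (weightedHomogeneousComponent w q)

theorem initialPart_le_initialIdeal (w : Fin n → G) (I : Ideal (MvPolynomial (Fin n) k))
    (q : G) : initialPart w I q ≤ (initialIdeal (weightLe w) I).restrictScalars k := by
  rintro _ ⟨f, ⟨hfI, hfq⟩, rfl⟩
  by_cases h : weightedHomogeneousComponent w q f = 0
  · exact h ▸ zero_mem _
  have hf : f ≠ 0 := by rintro rfl; exact h (map_zero _)
  rw [← initialForm_eq_weightedHomogeneousComponent w hfq h]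
  exact Ideal.subset_span ⟨f, hfI, hf, rfl⟩

theorem homogeneousComponent_mem_initialPart {σ : Type*} {w : σ → G}
    {J : Ideal (MvPolynomial σ k)} (hJ : J.IsHomogeneous (homogeneousSubmodule σ k)) {q : G}
    {x : MvPolynomial σ k} (hx : x ∈ initialPart w J q) (e : ℕ) :
    homogeneousComponent e x ∈ initialPart w J q := by
  obtain ⟨f, ⟨hfJ, hfq⟩, rfl⟩ := hx
  exact ⟨homogeneousComponent e f, ⟨homogeneousComponent_mem_of_mem hJ hfJ e,
    homogeneousComponent_mem_restrictSupport hfq e⟩,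
    (homogeneousComponent_weightedHomogeneousComponent w e q f).symm⟩

theorem isHomogeneous_initialIdeal {w : Fin n → G} {J : Ideal (MvPolynomial (Fin n) k)}
    (hJ : J.IsHomogeneous (homogeneousSubmodule (Fin n) k)) :
    (initialIdeal (weightLe w) J).IsHomogeneous (homogeneousSubmodule (Fin n) k) := by
  rw [Ideal.IsHomogeneous.iff_eq]
  refine le_antisymm (Ideal.toIdeal_homogeneousCore_le _ _) ?_
  rw [initialIdeal, Ideal.span_le]
  rintro _ ⟨f, hfJ, hf0, rfl⟩
  obtain ⟨q, hfq, -, hin⟩ := exists_initialForm_eq_weightedHomogeneousComponent w hf0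
  rw [hin, ← sum_homogeneousComponent (weightedHomogeneousComponent w q f)]
  refine Ideal.sum_mem _ fun e _ => Ideal.mem_homogeneousCore_of_homogeneous_of_mem
    ⟨e, homogeneousComponent_mem e _⟩ (initialPart_le_initialIdeal w J q ?_)
  exact homogeneousComponent_mem_initialPart hJ ⟨f, ⟨hfJ, hfq⟩, rfl⟩ e

end

variable {G : Type*} [AddCommGroup G] [LinearOrder G] [IsOrderedAddMonoid G]

theorem mul_mem_initialPart {σ : Type*} {w : σ → G} {I : Ideal (MvPolynomial σ k)}
    {a x : MvPolynomial σ k} {d q : G} (ha : a.IsWeightedHomogeneous w d)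
    (hx : x ∈ initialPart w I q) : a * x ∈ initialPart w I (d + q) := by
  classical
  obtain ⟨f, ⟨hfI, hfq⟩, rfl⟩ := hx
  refine ⟨a * f, ⟨I.mul_mem_left a hfI, fun γ hγ => ?_⟩,
    weightedHomogeneousComponent_mul_of_isWeightedHomogeneous ha q f⟩
  obtain ⟨α, hα, β, hβ, rfl⟩ := Finset.mem_add.1 (support_mul a f hγ)
  simp only [Set.mem_ofPred_eq, map_add, ha (mem_support_iff.1 hα)]
  exact add_le_add_right (hfq hβ) d

theorem weightedHomogeneousComponent_mem_initialPart {w : Fin n → G}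
    {I : Ideal (MvPolynomial (Fin n) k)} {g : MvPolynomial (Fin n) k}
    (hg : g ∈ initialIdeal (weightLe w) I) (q : G) :
    weightedHomogeneousComponent w q g ∈ initialPart w I q := by
  rw [initialIdeal] at hg
  induction hg using Submodule.span_induction generalizing q with
  | mem _ hg =>
    obtain ⟨f, hfI, hf0, rfl⟩ := hg
    obtain ⟨q₀, hfq₀, -, hin⟩ := exists_initialForm_eq_weightedHomogeneousComponent w hf0
    have hhom := weightedHomogeneousComponent_isWeightedHomogeneous (w := w) q₀ f
    rw [hin]
    by_cases hq : q = q₀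
    · subst hq
      rw [weightedHomogeneousComponent_eq_self hhom]
      exact ⟨f, ⟨hfI, hfq₀⟩, rfl⟩
    · rw [hhom.weightedHomogeneousComponent_ne q hq]
      exact zero_mem _
  | zero => simp only [map_zero, zero_mem]
  | add _ _ _ _ hx hy => simpa only [map_add] using add_mem (hx q) (hy q)
  | smul a x _ hx =>
    rw [smul_eq_mul, ← sum_weightedHomogeneousComponent w a,
      finsum_eq_sum _ (weightedHomogeneousComponent_finsupp a), Finset.sum_mul, map_sum]
    refine Submodule.sum_mem _ fun d _ => ?_
    have hd := weightedHomogeneousComponent_isWeightedHomogeneous (w := w) d a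
    have := mul_mem_initialPart hd (hx (q - d))
    rwa [← weightedHomogeneousComponent_mul_of_isWeightedHomogeneous hd, add_sub_cancel] at this

end InitialPart

section InitialMonomial

variable {σ k Λ : Type*} [Field k] [LinearOrder Λ] (κ : (σ →₀ ℕ) → Λ)

def IsInitialMonomial (f : MvPolynomial σ k) (μ : σ →₀ ℕ) : Prop :=
  μ ∈ f.support ∧ ∀ β ∈ f.support, κ μ ≤ κ β

def initialMonomials (V : Submodule k (MvPolynomial σ k)) : Set (σ →₀ ℕ) :=
  {μ | ∃ f ∈ V, IsInitialMonomial κ f μ}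

theorem exists_isInitialMonomial {f : MvPolynomial σ k} (hf : f ≠ 0) :
    ∃ μ, IsInitialMonomial κ f μ :=
  f.support.exists_min_image κ (support_nonempty.2 hf)

variable {κ}

theorem linearIndependent_of_isInitialMonomial (hκ : Function.Injective κ) {ι : Type*}
    {g : ι → MvPolynomial σ k} {μ : ι → σ →₀ ℕ} (hμ : Function.Injective μ)
    (hg : ∀ i, IsInitialMonomial κ (g i) (μ i)) : LinearIndependent k g := by
  classical
  rw [linearIndependent_iff']
  intro s c hsum i hi
  by_contra hci
  -- the `κ`-least `μ j` with `c j ≠ 0` lies in the support of no other `g l` with `c l ≠ 0`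
  obtain ⟨j, hj, hmin⟩ := (s.filter (c · ≠ 0)).exists_min_image (κ ∘ μ)
    ⟨i, Finset.mem_filter.2 ⟨hi, hci⟩⟩
  rw [Finset.mem_filter] at hj
  have hcoeff : coeff (μ j) (∑ i ∈ s, c i • g i) = c j * coeff (μ j) (g j) := by
    rw [coeff_sum, Finset.sum_eq_single j _ fun h => absurd hj.1 h, coeff_smul, smul_eq_mul]
    intro l hl hlj
    by_cases hcl : c l = 0
    · rw [hcl, zero_smul, coeff_zero]
    rw [coeff_smul, notMem_support_iff.1 fun hmem => hlj (hμ (hκ (le_antisymm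
      ((hg l).2 _ hmem) (hmin l (Finset.mem_filter.2 ⟨hl, hcl⟩))))), smul_zero]
  rw [hsum, coeff_zero, eq_comm] at hcoeff
  exact mul_ne_zero hj.2 (mem_support_iff.1 (hg j).1) hcoeff

theorem finrank_eq_ncard_initialMonomials (hκ : Function.Injective κ)
    (V : Submodule k (MvPolynomial σ k)) [FiniteDimensional k V] :
    Module.finrank k V = (initialMonomials κ V).ncard := by
  classical
  set L := initialMonomials κ V
  choose! g hgV hg using fun μ (hμ : μ ∈ L) => hμ
  have hli : LinearIndependent k fun μ : L => (⟨g μ, hgV μ μ.2⟩ : V) :=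
    LinearIndependent.of_comp V.subtype
      (linearIndependent_of_isInitialMonomial hκ Subtype.val_injective fun μ => hg μ μ.2)
  have := hli.finite
  let := Fintype.ofFinite L
  rw [← Nat.card_coe_set_eq, ← Fintype.card_eq_nat_card]
  refine le_antisymm ?_ hli.fintype_card_le_finrank
  let Φ : V →ₗ[k] L → k := LinearMap.pi fun μ => (lcoeff k μ.1).comp V.subtype
  have hΦ : Function.Injective Φ := by
    rw [← LinearMap.ker_eq_bot, eq_bot_iff]
    intro f hf
    by_contra hf0
    obtain ⟨μ, hμ⟩ := exists_isInitialMonomial κ (mt Submodule.coe_eq_zero.1 hf0)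
    exact mem_support_iff.1 hμ.1 (congrFun hf ⟨μ, f, f.2, hμ⟩)
  exact (LinearMap.finrank_le_finrank_of_injective hΦ).trans (Module.finrank_pi k).le

end InitialMonomial

section DegreePart

variable {k : Type} [Field k] {n : ℕ}

noncomputable def degreePart {σ : Type*} (J : Ideal (MvPolynomial σ k)) (e : ℕ) :
    Submodule k (MvPolynomial σ k) :=
  J.restrictScalars k ⊓ homogeneousSubmodule σ k e

instance {σ : Type*} [Finite σ] (J : Ideal (MvPolynomial σ k)) (e : ℕ) :
    FiniteDimensional k (degreePart J e) :=
  have := Module.Finite.iff_fg.2 (homogeneousSubmodule_fg σ k e)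
  Submodule.finiteDimensional_of_le inf_le_right

variable {G : Type*} {Λ : Type*} [LinearOrder Λ]

theorem isInitialMonomial_weightedHomogeneousComponent_iff [AddCommMonoid G] [LinearOrder G]
    {σ : Type*} {w : σ → G}
    {κ : (σ →₀ ℕ) → Λ} (hκ : ∀ β γ, weight w β < weight w γ → κ β < κ γ)
    {f : MvPolynomial σ k} {q : G} (hf : f ∈ restrictSupport k {β | q ≤ weight w β})
    (hq : weightedHomogeneousComponent w q f ≠ 0) {μ : σ →₀ ℕ} :
    IsInitialMonomial κ (weightedHomogeneousComponent w q f) μ ↔ IsInitialMonomial κ f μ := by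
  classical
  simp only [IsInitialMonomial, support_weightedHomogeneousComponent, Finset.mem_filter]
  constructor
  · rintro ⟨⟨hμ, hμq⟩, hmin⟩
    refine ⟨hμ, fun β hβ => ?_⟩
    rcases (hf hβ : q ≤ weight w β).eq_or_lt with h | h
    · exact hmin β ⟨hβ, h.symm⟩
    · exact (hκ μ β (hμq ▸ h)).le
  · rintro ⟨hμ, hmin⟩
    obtain ⟨γ, hγ⟩ := support_nonempty.2 hq
    rw [support_weightedHomogeneousComponent, Finset.mem_filter] at hγ
    have hμq : weight w μ = q :=
      le_antisymm (hγ.2 ▸ not_lt.1 fun h => (hmin γ hγ.1).not_gt (hκ _ _ h)) (hf hμ)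
    exact ⟨⟨hμ, hμq⟩, fun β hβ => hmin β hβ.1⟩

variable [AddCommGroup G] [LinearOrder G] [IsOrderedAddMonoid G]

theorem initialMonomials_degreePart_initialIdeal {w : Fin n → G} {κ : (Fin n →₀ ℕ) → Λ}
    (hκ : ∀ β γ, weight w β < weight w γ → κ β < κ γ) {J : Ideal (MvPolynomial (Fin n) k)}
    (hJ : J.IsHomogeneous (homogeneousSubmodule (Fin n) k)) (e : ℕ) :
    initialMonomials κ (degreePart (initialIdeal (weightLe w) J) e) =
      initialMonomials κ (degreePart J e) := by
  classical
  ext μ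
  constructor
  · rintro ⟨g, ⟨hgJ, hge⟩, hμ⟩
    have hgq : g ∈ restrictSupport k {β | weight w μ ≤ weight w β} :=
      fun β hβ => not_lt.1 fun h => (hμ.2 β hβ).not_gt (hκ _ _ h)
    have hq : weightedHomogeneousComponent w (weight w μ) g ≠ 0 := by
      rw [← support_nonempty]
      exact ⟨μ, by simpa [support_weightedHomogeneousComponent] using hμ.1⟩
    -- the weight-`w μ` part of `g` is that of some `f ∈ J`, hence of the degree-`e` part of `f`
    obtain ⟨f, ⟨hfJ, hfq⟩, hf⟩ := weightedHomogeneousComponent_mem_initialPart hgJ (weight w μ)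
    have hfe : weightedHomogeneousComponent w (weight w μ) (homogeneousComponent e f) =
        weightedHomogeneousComponent w (weight w μ) g := by
      rw [← homogeneousComponent_weightedHomogeneousComponent, hf,
        homogeneousComponent_weightedHomogeneousComponent, homogeneousComponent_eq_self hge]
    refine ⟨homogeneousComponent e f,
      ⟨homogeneousComponent_mem_of_mem hJ hfJ e, homogeneousComponent_mem e f⟩, ?_⟩
    rwa [← isInitialMonomial_weightedHomogeneousComponent_iff hκ
      (homogeneousComponent_mem_restrictSupport hfq e) (hfe ▸ hq), hfe,
      isInitialMonomial_weightedHomogeneousComponent_iff hκ hgq hq]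
  · rintro ⟨f, ⟨hfJ, hfe⟩, hμ⟩
    have hf0 : f ≠ 0 := by rintro rfl; simp [IsInitialMonomial] at hμ
    obtain ⟨q, hfq, hq, -⟩ := exists_initialForm_eq_weightedHomogeneousComponent w hf0
    refine ⟨weightedHomogeneousComponent w q f,
      ⟨initialPart_le_initialIdeal w J q ⟨f, ⟨hfJ, hfq⟩, rfl⟩, ?_⟩,
      (isInitialMonomial_weightedHomogeneousComponent_iff hκ hfq hq).2 hμ⟩
    rw [← homogeneousComponent_eq_self hfe, ← homogeneousComponent_weightedHomogeneousComponent]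
    exact homogeneousComponent_mem e _

theorem finrank_degreePart_initialIdeal (w : Fin n → G) {J : Ideal (MvPolynomial (Fin n) k)}
    (hJ : J.IsHomogeneous (homogeneousSubmodule (Fin n) k)) (e : ℕ) :
    Module.finrank k (degreePart (initialIdeal (weightLe w) J) e) =
      Module.finrank k (degreePart J e) := by
  let κ (β : Fin n →₀ ℕ) : Lex (G × Lex (Fin n →₀ ℕ)) := toLex (weight w β, toLex β)
  have hκ : Function.Injective κ := fun β γ h => congrArg Prod.snd (toLex.injective h)
  have hκw (β γ) (h : weight w β < weight w γ) : κ β < κ γ := Prod.Lex.lt_iff.2 (Or.inl h)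
  rw [finrank_eq_ncard_initialMonomials hκ, finrank_eq_ncard_initialMonomials hκ,
    initialMonomials_degreePart_initialIdeal hκw hJ]

theorem initialIdeal_eq_of_le {G' : Type*} [AddCommGroup G'] [LinearOrder G']
    [IsOrderedAddMonoid G'] {w : Fin n → G} {w' : Fin n → G'}
    {J : Ideal (MvPolynomial (Fin n) k)} (hJ : J.IsHomogeneous (homogeneousSubmodule (Fin n) k))
    (hle : initialIdeal (weightLe w) J ≤ initialIdeal (weightLe w') J) :
    initialIdeal (weightLe w) J = initialIdeal (weightLe w') J := by
  refine le_antisymm hle fun g hg => ?_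
  rw [mem_iff_homogeneousComponent_mem (isHomogeneous_initialIdeal hJ)] at hg ⊢
  intro e
  have heq : degreePart (initialIdeal (weightLe w) J) e =
      degreePart (initialIdeal (weightLe w') J) e :=
    Submodule.eq_of_le_of_finrank_le (inf_le_inf_right _ hle)
      (by rw [finrank_degreePart_initialIdeal w' hJ, finrank_degreePart_initialIdeal w hJ])
  have hmem : homogeneousComponent e g ∈ degreePart (initialIdeal (weightLe w') J) e :=
    ⟨hg e, homogeneousComponent_mem e g⟩
  exact (heq ▸ hmem).1

end DegreePart

section Homogenization

variable {k : Type} [Field k] {n : ℕ}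

theorem Finsupp.weight_cons_zero {G : Type*} [AddCommMonoid G] (w : Fin n → G)
    (β : Fin (n + 1) →₀ ℕ) : weight (Fin.cons 0 w : Fin (n + 1) → G) β = weight w β.tail := by
  simp [Finsupp.weight_apply, Finsupp.sum_fintype, Fin.sum_univ_succ, Finsupp.tail_apply]

theorem Finsupp.degree_cons (a : ℕ) (α : Fin n →₀ ℕ) :
    (Finsupp.cons a α).degree = a + α.degree := by
  simp [Finsupp.degree_eq_sum, Fin.sum_univ_succ]

noncomputable def dehomogenize : MvPolynomial (Fin (n + 1)) k →ₐ[k] MvPolynomial (Fin n) k :=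
  aeval (Fin.cons 1 X)

theorem dehomogenize_monomial (β : Fin (n + 1) →₀ ℕ) (c : k) :
    dehomogenize (monomial β c) = monomial β.tail c := by
  rw [dehomogenize, aeval_monomial, monomial_eq, Finsupp.prod_fintype _ _ fun _ => pow_zero _,
    Finsupp.prod_fintype _ _ fun _ => pow_zero _, Fin.prod_univ_succ]
  simp [Finsupp.tail_apply]

noncomputable def homogenize (e : ℕ) (f : MvPolynomial (Fin n) k) :
    MvPolynomial (Fin (n + 1)) k :=
  ∑ α ∈ f.support, monomial (Finsupp.cons (e - α.degree) α) (coeff α f)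

theorem dehomogenize_homogenize (e : ℕ) (f : MvPolynomial (Fin n) k) :
    dehomogenize (homogenize e f) = f := by
  simp only [homogenize, map_sum, dehomogenize_monomial, Finsupp.tail_cons]
  exact support_sum_monomial_coeff f

theorem isHomogeneous_homogenize {e : ℕ} {f : MvPolynomial (Fin n) k} (hf : f.totalDegree ≤ e) :
    (homogenize e f).IsHomogeneous e :=
  IsHomogeneous.sum _ _ _ fun α hα => isHomogeneous_monomial _ <| by
    have : α.degree ≤ e := (le_totalDegree hα).trans hf
    rw [Finsupp.degree_cons]
    omega

section

variable {G : Type*} [AddCommMonoid G]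

theorem weightedHomogeneousComponent_homogenize (w : Fin n → G) (q : G) (e : ℕ)
    (f : MvPolynomial (Fin n) k) :
    weightedHomogeneousComponent (Fin.cons 0 w : Fin (n + 1) → G) q (homogenize e f) =
      homogenize e (weightedHomogeneousComponent w q f) := by
  classical
  simp only [homogenize, map_sum, weightedHomogeneousComponent_monomial, Finsupp.weight_cons_zero,
    Finsupp.tail_cons, support_weightedHomogeneousComponent, Finset.sum_filter,
    coeff_weightedHomogeneousComponent]
  refine Finset.sum_congr rfl fun α _ => ?_
  split_ifs <;> rfl

theorem dehomogenize_weightedHomogeneousComponent (w : Fin n → G) (q : G)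
    (g : MvPolynomial (Fin (n + 1)) k) :
    dehomogenize (weightedHomogeneousComponent (Fin.cons 0 w : Fin (n + 1) → G) q g) =
      weightedHomogeneousComponent w q (dehomogenize g) := by
  classical
  induction g using MvPolynomial.induction_on' with
  | monomial β c =>
    simp only [weightedHomogeneousComponent_monomial, Finsupp.weight_cons_zero,
      apply_ite dehomogenize, dehomogenize_monomial, map_zero]
  | add p p' hp hp' => simp only [map_add, hp, hp']

theorem homogenize_mem_restrictSupport [LE G] {w : Fin n → G} {q : G} {f : MvPolynomial (Fin n) k}
    (hf : f ∈ restrictSupport k {α | q ≤ weight w α}) (e : ℕ) :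
    homogenize e f ∈ restrictSupport k {β | q ≤ weight (Fin.cons 0 w : Fin (n + 1) → G) β} :=
  Submodule.sum_mem _ fun α hα => (monomial_mem_restrictSupport k).2 <| Or.inl <| by
    simpa [Finsupp.weight_cons_zero] using hf hα

theorem dehomogenize_mem_restrictSupport [LE G] {w : Fin n → G} {q : G}
    {g : MvPolynomial (Fin (n + 1)) k}
    (hg : g ∈ restrictSupport k {β | q ≤ weight (Fin.cons 0 w : Fin (n + 1) → G) β}) :
    dehomogenize g ∈ restrictSupport k {α | q ≤ weight w α} := by
  rw [← support_sum_monomial_coeff g, map_sum]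
  refine Submodule.sum_mem _ fun β hβ => ?_
  rw [dehomogenize_monomial]
  exact (monomial_mem_restrictSupport k).2 <| Or.inl <| by
    simpa [Finsupp.weight_cons_zero] using hg hβ

end

noncomputable def homogenization (I : Ideal (MvPolynomial (Fin n) k)) :
    Ideal (MvPolynomial (Fin (n + 1)) k) :=
  (I.comap dehomogenize).homogeneousCore' (homogeneousSubmodule (Fin (n + 1)) k)

theorem isHomogeneous_homogenization (I : Ideal (MvPolynomial (Fin n) k)) :
    (homogenization I).IsHomogeneous (homogeneousSubmodule (Fin (n + 1)) k) :=
  (Ideal.homogeneousCore _ _).isHomogeneous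

theorem homogenize_mem_homogenization {I : Ideal (MvPolynomial (Fin n) k)}
    {f : MvPolynomial (Fin n) k} (hf : f ∈ I) : homogenize f.totalDegree f ∈ homogenization I :=
  Ideal.mem_homogeneousCore_of_homogeneous_of_mem ⟨_, isHomogeneous_homogenize le_rfl⟩
    (by rwa [Ideal.mem_comap, dehomogenize_homogenize])

theorem map_dehomogenize_initialIdeal {G : Type*} [AddCommMonoid G] [LinearOrder G]
    (w : Fin n → G) (I : Ideal (MvPolynomial (Fin n) k)) :
    (initialIdeal (weightLe (Fin.cons 0 w : Fin (n + 1) → G)) (homogenization I)).map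
      dehomogenize = initialIdeal (weightLe w) I := by
  apply le_antisymm
  · rw [initialIdeal, Ideal.map_span, Ideal.span_le]
    rintro _ ⟨_, ⟨g, hgJ, hg0, rfl⟩, rfl⟩
    obtain ⟨q, hgq, -, hin⟩ :=
      exists_initialForm_eq_weightedHomogeneousComponent (Fin.cons 0 w : Fin (n + 1) → G) hg0
    rw [hin, dehomogenize_weightedHomogeneousComponent]
    exact initialPart_le_initialIdeal w I q
      ⟨_, ⟨Ideal.homogeneousCore'_le _ (I.comap dehomogenize) hgJ,
        dehomogenize_mem_restrictSupport hgq⟩, rfl⟩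
  · rw [initialIdeal, Ideal.span_le]
    rintro _ ⟨f, hfI, hf0, rfl⟩
    obtain ⟨q, hfq, hq, hin⟩ := exists_initialForm_eq_weightedHomogeneousComponent w hf0
    set e := f.totalDegree
    have hcomp := weightedHomogeneousComponent_homogenize w q e f
    have hq' : weightedHomogeneousComponent (Fin.cons 0 w : Fin (n + 1) → G) q
        (homogenize e f) ≠ 0 := by
      rw [hcomp]
      refine fun h => hq ?_
      rw [← dehomogenize_homogenize e (weightedHomogeneousComponent w q f), h, map_zero]
    have hin' := initialForm_eq_weightedHomogeneousComponent _
      (homogenize_mem_restrictSupport hfq e) hq'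
    have hhom0 : homogenize e f ≠ 0 := fun h => hq' (by rw [h, map_zero])
    rw [hin, ← dehomogenize_homogenize e (weightedHomogeneousComponent w q f), ← hcomp, ← hin']
    exact Ideal.mem_map_of_mem _
      (Ideal.subset_span ⟨_, homogenize_mem_homogenization hfI, hhom0, rfl⟩)

end Homogenization

section LexWeights

open Matrix

variable {K : Type*} [Field K] [LinearOrder K] [IsStrictOrderedRing K]

theorem exists_dotProduct_pos {r : ℕ} (D : Finset (Fin r → K)) (hD : ∀ d ∈ D, 0 < toLex d) :
    ∃ c : Fin r → K, ∀ d ∈ D, 0 < c ⬝ᵥ d := by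
  induction r with
  | zero =>
    exact ⟨0, fun d hd => absurd (hD d hd) (by rw [Subsingleton.elim d 0]; exact lt_irrefl _)⟩
  | succ r ih =>
    classical
    have hpos (d) (hd : d ∈ D) : 0 < d 0 ∨ d 0 = 0 ∧ 0 < toLex (vecTail d) := by
      obtain ⟨i, hi, hdi⟩ := hD d hd
      cases i using Fin.cases with
      | zero => exact Or.inl hdi
      | succ i => exact Or.inr ⟨(hi 0 i.succ_pos).symm, i,
          fun j hj => hi j.succ (Fin.succ_lt_succ_iff.2 hj), hdi⟩
    obtain ⟨c, hc⟩ := ih ((D.filter (· 0 = 0)).image vecTail) <| by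
      simp only [Finset.mem_image, Finset.mem_filter]
      rintro _ ⟨d, ⟨hd, hd0⟩, rfl⟩
      exact ((hpos d hd).resolve_left (by simp [hd0])).2
    -- a large enough head coefficient takes care of the vectors with positive head
    obtain ⟨N, hN⟩ : ∃ N : K, ∀ d ∈ D, 0 < d 0 → 0 < N * d 0 + c ⬝ᵥ vecTail d :=
      ((Filter.eventually_all_finset D).2 fun d _ => Filter.eventually_imp_distrib_left.2
        fun hd0 => (Filter.tendsto_atTop_add_const_right _ _
          (Filter.tendsto_id.atTop_mul_const hd0)).eventually_gt_atTop 0).exists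
    refine ⟨vecCons N c, fun d hd => ?_⟩
    rw [cons_dotProduct]
    rcases hpos d hd with hd0 | ⟨hd0, -⟩
    · exact hN d hd hd0
    · rw [vecHead, hd0, mul_zero, zero_add]
      exact hc _ (Finset.mem_image_of_mem _ (Finset.mem_filter.2 ⟨hd, hd0⟩))

theorem exists_weightLe_iff_dotProduct {m r : ℕ} (v : Fin m → Fin r → K)
    (S : Finset (Fin m →₀ ℕ)) : ∃ c : Fin r → K, ∀ α ∈ S, ∀ β ∈ S,
      weightLe (fun j => toLex (v j)) α β ↔ weightLe (fun j => c ⬝ᵥ v j) α β := by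
  classical
  set W : (Fin m →₀ ℕ) →+ Lex (Fin r → K) := weight fun j => toLex (v j)
  have hweight (c : Fin r → K) (α : Fin m →₀ ℕ) :
      weight (fun j => c ⬝ᵥ v j) α = c ⬝ᵥ ofLex (W α) := by
    rw [Finsupp.weight_eq_sum, Finsupp.weight_eq_sum]
    change _ = c ⬝ᵥ ∑ j, α j • v j
    simp only [dotProduct_sum, dotProduct_smul]
  obtain ⟨c, hc⟩ := exists_dotProduct_pos
    (((S ×ˢ S).filter fun p => W p.1 < W p.2).image fun p => ofLex (W p.2) - ofLex (W p.1)) <| by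
      simp only [Finset.mem_image, Finset.mem_filter]
      rintro _ ⟨p, ⟨-, hp⟩, rfl⟩
      exact sub_pos.2 hp
  have hlt {α β} (hα : α ∈ S) (hβ : β ∈ S) (h : W α < W β) :
      c ⬝ᵥ ofLex (W α) < c ⬝ᵥ ofLex (W β) := by
    have := hc _ (Finset.mem_image.2 ⟨(α, β), Finset.mem_filter.2
      ⟨Finset.mem_product.2 ⟨hα, hβ⟩, h⟩, rfl⟩)
    rwa [dotProduct_sub, sub_pos] at this
  refine ⟨c, fun α hα β hβ => ?_⟩
  simp only [weightLe, hweight]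
  refine ⟨fun h => ?_, fun h => not_lt.1 fun h' => (hlt hβ hα h').not_ge h⟩
  rcases h.eq_or_lt with h | h
  · rw [h]
  · exact (hlt hα hβ h).le

end LexWeights

theorem mLe_eq_weightLe {n r : ℕ} (M : Matrix (Fin r) (Fin n) ℚ) :
    mLe M = weightLe fun j => toLex fun i => M i j := by
  have (α : Fin n →₀ ℕ) : toLex (mwt M α) = weight (fun j => toLex fun i => M i j) α := by
    rw [Finsupp.weight_eq_sum]
    change toLex _ = toLex (∑ j, α j • fun i => M i j)
    congr 1
    ext i
    simp [mwt, mul_comm]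
  ext α β
  simp only [mLe, weightLe, this]

theorem uLe_eq_weightLe {n : ℕ} (u : Fin n → ℚ) : uLe u = weightLe u := by
  have (α : Fin n →₀ ℕ) : uwt u α = weight u α := by
    simp [uwt, Finsupp.weight_eq_sum, mul_comm]
  ext α β
  simp only [uLe, weightLe, this]

/-- **Every higher-rank initial ideal is a rank-one initial ideal**
(Proposition `prop-in-u-rep-in-w`): for any ideal `I` and any weighting matrix
`M ∈ ℚ^{r×n}` there is a single weight vector `u ∈ ℚ^n` with `in_M(I) = in_u(I)`. -/
theorem stmt_10 {k : Type} [Field k] {n r : ℕ}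
    (I : Ideal (MvPolynomial (Fin n) k)) (M : Matrix (Fin r) (Fin n) ℚ) :
    ∃ u : Fin n → ℚ, initialIdeal (mLe M) I = initialIdeal (uLe u) I := by
  let v : Fin (n + 1) → Fin r → ℚ := Fin.cons 0 fun j i => M i j
  obtain ⟨S, hS⟩ := exists_finset_initialIdeal_le (weightLe fun j => toLex (v j)) (homogenization I)
  obtain ⟨c, hc⟩ := exists_weightLe_iff_dotProduct v S
  have hvM : (fun j => toLex (v j)) = Fin.cons 0 fun j => toLex fun i => M i j := by
    ext j : 1
    cases j using Fin.cases <;> rfl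
  have hvu : (fun j => c ⬝ᵥ v j) = Fin.cons 0 (Matrix.vecMul c M) := by
    ext j : 1
    cases j using Fin.cases <;> simp [v, Matrix.vecMul]
  refine ⟨Matrix.vecMul c M, ?_⟩
  rw [mLe_eq_weightLe, uLe_eq_weightLe, ← map_dehomogenize_initialIdeal _ I,
    ← map_dehomogenize_initialIdeal (Matrix.vecMul c M) I, ← hvM, ← hvu,
    initialIdeal_eq_of_le (isHomogeneous_homogenization I) (hS _ hc)]
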